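/- arXiv:2003.00292 — 2 statements merged into one kernel-verified Lean document; each statement's English description precedes it below -/
import Mathlib

section
/- Let U ⊆ ℝⁿ be nonempty and closed, let ψ : ℝⁿ → ℝ be differentiable with L-Lipschitz gradient (L > 0), and let 0 < γ ≤ 1/L. Then for every u ∈ ℝⁿ and every point t ∈ U attaining the distance from u − γ∇ψ(u) to U (i.e., ‖(u − γ∇ψ(u)) − t‖ = dist_U(u − γ∇ψ(u))), one has ψ(t) ≤ φ_γ(u). -/
/-!
The descent lemma bounds `ψ t` by the quadratic model
`ψ u + ⟪∇ψ u, t - u⟫ + (L / 2) ‖t - u‖²`, and `γ ≤ 1 / L` lets `L / 2` be replaced by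
`1 / (2γ)`. Completing the square turns that model into
`ψ u - (γ / 2) ‖∇ψ u‖² + (1 / (2γ)) ‖u - γ ∇ψ u - t‖²` for every `t`; for a nearest point `t` of
`U` the last norm is `dist_U (u - γ ∇ψ u)`.
-/

section LipschitzGradient

variable {E : Type*} [NormedAddCommGroup E] [InnerProductSpace ℝ E]
  {ψ : E → ℝ} {ψ' : E → E} {L : ℝ}

theorem hasDerivAt_comp_add_smul_of_hasGradientAt [CompleteSpace E]
    (hψ : ∀ x, HasGradientAt ψ (ψ' x) x) (u d : E) (s : ℝ) :
    HasDerivAt (fun s : ℝ => ψ (u + s • d)) (inner ℝ (ψ' (u + s • d)) d) s := by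
  have hline : HasDerivAt (fun s : ℝ => u + s • d) d s := by
    simpa using ((hasDerivAt_id s).smul_const d).const_add u
  exact (hψ (u + s • d)).hasFDerivAt.comp_hasDerivAt s hline

theorem inner_sub_gradient_le_of_lipschitz (hlip : ∀ x w, ‖ψ' x - ψ' w‖ ≤ L * ‖x - w‖)
    (u d : E) {s : ℝ} (hs : 0 ≤ s) :
    inner ℝ (ψ' (u + s • d) - ψ' u) d ≤ L * ‖d‖ ^ 2 * s :=
  calc inner ℝ (ψ' (u + s • d) - ψ' u) d
      ≤ ‖ψ' (u + s • d) - ψ' u‖ * ‖d‖ := real_inner_le_norm _ _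
    _ ≤ L * ‖s • d‖ * ‖d‖ := by
        gcongr
        simpa using hlip (u + s • d) u
    _ = L * ‖d‖ ^ 2 * s := by rw [norm_smul, Real.norm_of_nonneg hs]; ring

theorem descent_lemma [CompleteSpace E] (hψ : ∀ x, HasGradientAt ψ (ψ' x) x)
    (hlip : ∀ x w, ‖ψ' x - ψ' w‖ ≤ L * ‖x - w‖) (u t : E) :
    ψ t ≤ ψ u + inner ℝ (ψ' u) (t - u) + L / 2 * ‖t - u‖ ^ 2 := by
  set d := t - u
  let f : ℝ → ℝ := fun s => ψ (u + s • d) - s * inner ℝ (ψ' u) d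
  let B : ℝ → ℝ := fun s => ψ u + L * ‖d‖ ^ 2 * s ^ 2 / 2
  have hf : ∀ s, HasDerivAt f (inner ℝ (ψ' (u + s • d)) d - inner ℝ (ψ' u) d) s := fun s =>
    (hasDerivAt_comp_add_smul_of_hasGradientAt hψ u d s).sub (hasDerivAt_mul_const _)
  have hB : ∀ s, HasDerivAt B (L * ‖d‖ ^ 2 * s) s := fun s => by
    refine (((hasDerivAt_pow 2 s).const_mul (L * ‖d‖ ^ 2)).div_const 2).const_add (ψ u)
      |>.congr_deriv ?_
    norm_num
    ring
  have hfB : f 1 ≤ B 1 :=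
    image_le_of_deriv_right_le_deriv_boundary
      (fun s _ => (hf s).continuousAt.continuousWithinAt) (fun s _ => (hf s).hasDerivWithinAt)
      (by simp [f, B]) (fun s _ => (hB s).continuousAt.continuousWithinAt)
      (fun s _ => (hB s).hasDerivWithinAt)
      (fun s hs => by
        rw [← inner_sub_left]
        exact inner_sub_gradient_le_of_lipschitz hlip u d hs.1)
      (Set.right_mem_Icc.mpr zero_le_one)
  simp only [f, B, one_smul, one_mul, one_pow, add_sub_cancel, d] at hfB
  linarith

theorem norm_sub_smul_sub_sq (u g t : E) {γ : ℝ} (hγ : 0 ≤ γ) :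
    ‖u - γ • g - t‖ ^ 2 = ‖t - u‖ ^ 2 + 2 * γ * inner ℝ g (t - u) + γ ^ 2 * ‖g‖ ^ 2 := by
  rw [show u - γ • g - t = -((t - u) + γ • g) by abel, norm_neg, norm_add_sq_real,
    real_inner_smul_right, real_inner_comm, norm_smul, Real.norm_of_nonneg hγ]
  ring

theorem le_sub_add_norm_sub_smul_sq_of_lipschitz_gradient [CompleteSpace E] {γ : ℝ}
    (hψ : ∀ x, HasGradientAt ψ (ψ' x) x) (hlip : ∀ x w, ‖ψ' x - ψ' w‖ ≤ L * ‖x - w‖)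
    (hγ : 0 < γ) (hγL : γ * L ≤ 1) (u t : E) :
    ψ t ≤ ψ u - γ / 2 * ‖ψ' u‖ ^ 2 + 1 / (2 * γ) * ‖u - γ • ψ' u - t‖ ^ 2 := by
  have hhalf : L / 2 ≤ 1 / (2 * γ) := by
    rw [div_le_div_iff₀ two_pos (by positivity)]
    linarith
  have hsq := norm_sub_smul_sub_sq u (ψ' u) t hγ.le
  calc ψ t ≤ ψ u + inner ℝ (ψ' u) (t - u) + L / 2 * ‖t - u‖ ^ 2 := descent_lemma hψ hlip u t
    _ ≤ ψ u + inner ℝ (ψ' u) (t - u) + 1 / (2 * γ) * ‖t - u‖ ^ 2 := by gcongr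
    _ = ψ u - γ / 2 * ‖ψ' u‖ ^ 2 + 1 / (2 * γ) * ‖u - γ • ψ' u - t‖ ^ 2 := by
        rw [hsq]
        field_simp
        ring

end LipschitzGradient

theorem psi_proj_le_fbe_general
    (n : ℕ)
    (U : Set (EuclideanSpace ℝ (Fin n)))
    (ψ : EuclideanSpace ℝ (Fin n) → ℝ)
    (ψ' : EuclideanSpace ℝ (Fin n) → EuclideanSpace ℝ (Fin n))
    (hψ : ∀ x, HasGradientAt ψ (ψ' x) x)
    (L : ℝ)
    (hlip : ∀ x w, ‖ψ' x - ψ' w‖ ≤ L * ‖x - w‖)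
    (γ : ℝ) (hγ : 0 < γ) (hγL : γ ≤ 1 / L) :
    ∀ u : EuclideanSpace ℝ (Fin n), ∀ t ∈ U,
      ‖(u - γ • ψ' u) - t‖ = Metric.infDist (u - γ • ψ' u) U →
      ψ t ≤ ψ u - (γ / 2) * ‖ψ' u‖ ^ 2
          + (1 / (2 * γ)) * (Metric.infDist (u - γ • ψ' u) U) ^ 2 := by
  intro u t _ hdist
  have hL : 0 < L := one_div_pos.mp (hγ.trans_le hγL)
  rw [← hdist]
  exact le_sub_add_norm_sub_smul_sq_of_lipschitz_gradient hψ hlip hγ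
    ((le_div_iff₀ hL).mp hγL) u t

/-- if `∇ψ` is `L`-Lipschitz and `0 < γ ≤ 1/L`, then for every
`u` and every point `t ∈ U` attaining the distance from `u − γ∇ψ(u)` to `U`,
one has `ψ(t) ≤ φ_γ(u)`. -/
theorem psi_proj_le_fbe
    (n : ℕ) (hn : 0 < n)
    (U : Set (EuclideanSpace ℝ (Fin n))) (hU : U.Nonempty)
    (hUclosed : IsClosed U)
    (ψ : EuclideanSpace ℝ (Fin n) → ℝ)
    (ψ' : EuclideanSpace ℝ (Fin n) → EuclideanSpace ℝ (Fin n))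
    (hψ : ∀ x, HasGradientAt ψ (ψ' x) x)
    (L : ℝ) (hL : 0 < L)
    (hlip : ∀ x w, ‖ψ' x - ψ' w‖ ≤ L * ‖x - w‖)
    (γ : ℝ) (hγ : 0 < γ) (hγL : γ ≤ 1 / L) :
    ∀ u : EuclideanSpace ℝ (Fin n), ∀ t ∈ U,
      ‖(u - γ • ψ' u) - t‖ = Metric.infDist (u - γ • ψ' u) U →
      ψ t ≤ ψ u - (γ / 2) * ‖ψ' u‖ ^ 2
          + (1 / (2 * γ)) * (Metric.infDist (u - γ • ψ' u) U) ^ 2 :=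
  psi_proj_le_fbe_general n U ψ ψ' hψ L hlip γ hγ hγL
end

section
/- Let U ⊆ ℝⁿ be nonempty and closed, let ψ : ℝⁿ → ℝ be differentiable with L-Lipschitz gradient (L > 0), and let 0 < γ ≤ 1/L. Then the infimum of the forward-backward envelope over ℝⁿ equals the infimum of ψ over U: inf_{u ∈ ℝⁿ} φ_γ(u) = inf_{u ∈ U} ψ(u) (as an equality in the extended reals ℝ ∪ {−∞}). In other words, the forward-backward envelope is a merit function sharing its minimum value with the constrained problem min_{u ∈ U} ψ(u). -/
/-!
On `U` the envelope lies below `ψ`, because `dist_U (v - γ ∇ψ v) ≤ γ ‖∇ψ v‖` for `v ∈ U`.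
Conversely, if `v ∈ U` is a nearest point of `u - γ ∇ψ u`, completing the square gives
`φ_γ u = ψ u + ⟪∇ψ u, v - u⟫ + ‖v - u‖² / (2γ)`, and since `L ≤ 1/γ` the descent lemma
bounds this from below by `ψ v`.
-/

open RealInnerProductSpace

section Gradient

variable {E : Type*} [NormedAddCommGroup E] [InnerProductSpace ℝ E] [CompleteSpace E]
  {ψ : E → ℝ} {ψ' : E → E}

theorem HasGradientAt.hasDerivAt_comp_add_smul {g u d : E} {t : ℝ}
    (h : HasGradientAt ψ g (u + t • d)) :
    HasDerivAt (fun s : ℝ => ψ (u + s • d)) ⟪g, d⟫ t := by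
  have hline : HasDerivAt (fun s : ℝ => u + s • d) d t := by
    simpa using ((hasDerivAt_id t).smul_const d).const_add u
  exact h.hasFDerivAt.comp_hasDerivAt t hline

theorem le_add_inner_add_sq_of_lipschitz_gradient (hψ : ∀ x, HasGradientAt ψ (ψ' x) x)
    {L : ℝ} (hlip : ∀ x w, ‖ψ' x - ψ' w‖ ≤ L * ‖x - w‖) (u v : E) :
    ψ v ≤ ψ u + ⟪ψ' u, v - u⟫ + L / 2 * ‖v - u‖ ^ 2 := by
  set d := v - u
  let f : ℝ → ℝ := fun t => ψ (u + t • d) - t * ⟪ψ' u, d⟫ - L / 2 * t ^ 2 * ‖d‖ ^ 2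
  have hf : ∀ t, HasDerivAt f (⟪ψ' (u + t • d), d⟫ - ⟪ψ' u, d⟫ - L * t * ‖d‖ ^ 2) t := by
    intro t
    have hquad := ((hasDerivAt_pow 2 t).const_mul (L / 2)).mul_const (‖d‖ ^ 2)
    refine (((hψ _).hasDerivAt_comp_add_smul).sub
      ((hasDerivAt_id t).mul_const ⟪ψ' u, d⟫)).sub hquad |>.congr_deriv ?_
    simp only [one_mul, Nat.cast_ofNat, Nat.add_one_sub_one, pow_one]
    ring
  have hf_deriv_nonpos : ∀ t ∈ interior (Set.Icc (0 : ℝ) 1), deriv f t ≤ 0 := by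
    intro t ht
    rw [interior_Icc] at ht
    have hgrad : ‖ψ' (u + t • d) - ψ' u‖ ≤ L * (t * ‖d‖) := by
      simpa [norm_smul, abs_of_pos ht.1] using hlip (u + t • d) u
    have hinner : ⟪ψ' (u + t • d), d⟫ - ⟪ψ' u, d⟫ ≤ L * (t * ‖d‖) * ‖d‖ := by
      rw [← inner_sub_left]
      exact (real_inner_le_norm _ d).trans (mul_le_mul_of_nonneg_right hgrad (norm_nonneg d))
    rw [(hf t).deriv]
    linarith [show L * (t * ‖d‖) * ‖d‖ = L * t * ‖d‖ ^ 2 by ring]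
  have hanti : AntitoneOn f (Set.Icc 0 1) :=
    antitoneOn_of_deriv_nonpos (convex_Icc 0 1)
      (HasDerivAt.continuousOn fun t _ => hf t)
      (fun t _ => (hf t).differentiableAt.differentiableWithinAt) hf_deriv_nonpos
  have hf01 :=
    hanti (Set.left_mem_Icc.2 zero_le_one) (Set.right_mem_Icc.2 zero_le_one) zero_le_one
  norm_num [f, d] at hf01
  linarith

end Gradient

section ForwardBackwardEnvelope

variable {E : Type*} [NormedAddCommGroup E]

noncomputable def forwardBackwardEnvelope [NormedSpace ℝ E] (U : Set E) (ψ : E → ℝ)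
    (ψ' : E → E) (γ : ℝ) (u : E) : ℝ :=
  ψ u - (γ / 2) * ‖ψ' u‖ ^ 2 + (1 / (2 * γ)) * Metric.infDist (u - γ • ψ' u) U ^ 2

theorem forwardBackwardEnvelope_le_of_mem [NormedSpace ℝ E] {U : Set E} {ψ : E → ℝ}
    {ψ' : E → E} {γ : ℝ} (hγ : 0 < γ) {v : E} (hv : v ∈ U) :
    forwardBackwardEnvelope U ψ ψ' γ v ≤ ψ v := by
  have hdist : Metric.infDist (v - γ • ψ' v) U ≤ γ * ‖ψ' v‖ := by
    simpa [dist_eq_norm, norm_smul, abs_of_pos hγ] using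
      Metric.infDist_le_dist_of_mem (x := v - γ • ψ' v) hv
  have hsq : (1 / (2 * γ)) * Metric.infDist (v - γ • ψ' v) U ^ 2 ≤ (γ / 2) * ‖ψ' v‖ ^ 2 :=
    calc (1 / (2 * γ)) * Metric.infDist (v - γ • ψ' v) U ^ 2
        ≤ (1 / (2 * γ)) * (γ * ‖ψ' v‖) ^ 2 := by gcongr; exact Metric.infDist_nonneg
      _ = (γ / 2) * ‖ψ' v‖ ^ 2 := by field_simp
  unfold forwardBackwardEnvelope
  linarith

variable [InnerProductSpace ℝ E]

theorem inner_add_one_div_mul_norm_sq_eq (g x : E) {γ : ℝ} (hγ : γ ≠ 0) :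
    ⟪g, x⟫ + 1 / (2 * γ) * ‖x‖ ^ 2 = -(γ / 2) * ‖g‖ ^ 2 + 1 / (2 * γ) * ‖x + γ • g‖ ^ 2 := by
  rw [norm_add_sq_real, inner_smul_right, norm_smul, real_inner_comm, Real.norm_eq_abs,
    mul_pow, sq_abs]
  field_simp
  ring

theorem le_sub_add_norm_sub_sq_of_lipschitz_gradient [CompleteSpace E] {ψ : E → ℝ}
    {ψ' : E → E} (hψ : ∀ x, HasGradientAt ψ (ψ' x) x) {L : ℝ}
    (hlip : ∀ x w, ‖ψ' x - ψ' w‖ ≤ L * ‖x - w‖) {γ : ℝ} (hγ : 0 < γ) (hLγ : L * γ ≤ 1)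
    (u v : E) :
    ψ v ≤ ψ u - (γ / 2) * ‖ψ' u‖ ^ 2 + (1 / (2 * γ)) * ‖u - γ • ψ' u - v‖ ^ 2 := by
  have hL : L / 2 ≤ 1 / (2 * γ) := by
    rw [div_le_div_iff₀ two_pos (by positivity)]
    linarith
  have hnorm : ‖u - γ • ψ' u - v‖ = ‖v - u + γ • ψ' u‖ := by
    rw [← norm_neg]
    congr 1
    abel
  calc ψ v ≤ ψ u + ⟪ψ' u, v - u⟫ + L / 2 * ‖v - u‖ ^ 2 :=
        le_add_inner_add_sq_of_lipschitz_gradient hψ hlip u v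
    _ ≤ ψ u + (⟪ψ' u, v - u⟫ + 1 / (2 * γ) * ‖v - u‖ ^ 2) := by
        rw [← add_assoc]
        gcongr
    _ = _ := by
        rw [inner_add_one_div_mul_norm_sq_eq _ _ hγ.ne', hnorm]
        ring

theorem exists_mem_le_forwardBackwardEnvelope [ProperSpace E]
    {U : Set E} (hU : U.Nonempty) (hUclosed : IsClosed U) {ψ : E → ℝ} {ψ' : E → E}
    (hψ : ∀ x, HasGradientAt ψ (ψ' x) x) {L : ℝ} (hlip : ∀ x w, ‖ψ' x - ψ' w‖ ≤ L * ‖x - w‖)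
    {γ : ℝ} (hγ : 0 < γ) (hLγ : L * γ ≤ 1) (u : E) :
    ∃ v ∈ U, ψ v ≤ forwardBackwardEnvelope U ψ ψ' γ u := by
  obtain ⟨v, hvU, hv⟩ := hUclosed.exists_infDist_eq_dist hU (u - γ • ψ' u)
  refine ⟨v, hvU, ?_⟩
  rw [forwardBackwardEnvelope, hv, dist_eq_norm]
  exact le_sub_add_norm_sub_sq_of_lipschitz_gradient hψ hlip hγ hLγ u v

end ForwardBackwardEnvelope

theorem fbe_inf_eq_psi_inf_general
    (n : ℕ)
    (U : Set (EuclideanSpace ℝ (Fin n))) (hU : U.Nonempty)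
    (hUclosed : IsClosed U)
    (ψ : EuclideanSpace ℝ (Fin n) → ℝ)
    (ψ' : EuclideanSpace ℝ (Fin n) → EuclideanSpace ℝ (Fin n))
    (hψ : ∀ x, HasGradientAt ψ (ψ' x) x)
    (L : ℝ)
    (hlip : ∀ x w, ‖ψ' x - ψ' w‖ ≤ L * ‖x - w‖)
    (γ : ℝ) (hγ : 0 < γ) (hγL : γ ≤ 1 / L) :
    (⨅ u : EuclideanSpace ℝ (Fin n),
        ((ψ u - (γ / 2) * ‖ψ' u‖ ^ 2
          + (1 / (2 * γ)) * (Metric.infDist (u - γ • ψ' u) U) ^ 2 : ℝ) : EReal))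
      = ⨅ u ∈ U, ((ψ u : ℝ) : EReal) := by
  have hL : 0 < L := one_div_pos.mp (hγ.trans_le hγL)
  have hLγ : L * γ ≤ 1 := by
    rw [le_div_iff₀ hL] at hγL
    linarith
  change ⨅ u, ((forwardBackwardEnvelope U ψ ψ' γ u : ℝ) : EReal) = _
  refine le_antisymm (le_iInf₂ fun v hv => ?_) (le_iInf fun u => ?_)
  · exact iInf_le_of_le v (EReal.coe_le_coe (forwardBackwardEnvelope_le_of_mem hγ hv))
  · obtain ⟨v, hvU, hv⟩ := exists_mem_le_forwardBackwardEnvelope hU hUclosed hψ hlip hγ hLγ u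
    exact iInf₂_le_of_le v hvU (EReal.coe_le_coe hv)

/-- if `∇ψ` is `L`-Lipschitz and `0 < γ ≤ 1/L`, then the infimum
of the forward-backward envelope over `ℝⁿ` equals the infimum of `ψ` over `U`
(as an equality in the extended reals). -/
theorem fbe_inf_eq_psi_inf
    (n : ℕ) (hn : 0 < n)
    (U : Set (EuclideanSpace ℝ (Fin n))) (hU : U.Nonempty)
    (hUclosed : IsClosed U)
    (ψ : EuclideanSpace ℝ (Fin n) → ℝ)
    (ψ' : EuclideanSpace ℝ (Fin n) → EuclideanSpace ℝ (Fin n))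
    (hψ : ∀ x, HasGradientAt ψ (ψ' x) x)
    (L : ℝ) (hL : 0 < L)
    (hlip : ∀ x w, ‖ψ' x - ψ' w‖ ≤ L * ‖x - w‖)
    (γ : ℝ) (hγ : 0 < γ) (hγL : γ ≤ 1 / L) :
    (⨅ u : EuclideanSpace ℝ (Fin n),
        ((ψ u - (γ / 2) * ‖ψ' u‖ ^ 2
          + (1 / (2 * γ)) * (Metric.infDist (u - γ • ψ' u) U) ^ 2 : ℝ) : EReal))
      = ⨅ u ∈ U, ((ψ u : ℝ) : EReal) :=
  fbe_inf_eq_psi_inf_general n U hU hUclosed ψ ψ' hψ L hlip γ hγ hγL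
end
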